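/- arXiv:1811.10976 — 2 statements merged into one kernel-verified Lean document; each statement's English description precedes it below -/
import Mathlib

section
/- With the same setup, G(φ̄)·G(φ) = φ(-1)·N(c). -/
/-!
For a nonunit `a` of the finite ring `R = 𝓞 F ⧸ c` the annihilator of `a` is nonzero, so
primitivity of `φ` gives a unit `u ≡ 1` modulo it with `φ u ≠ 1`. Then `a u = a`, and the
substitution `x ↦ u x` shows that `∑ₓ φ x ψ (a x)` is `φ u` times itself, hence zero. For a unit
`a` the same substitution gives `φ̄ a · G(φ)`. Therefore
`G(φ̄) G(φ) = ∑ₐ ψ a ∑ₓ φ x ψ (a x) = ∑ₓ φ x ∑ₐ ψ (a (1 + x))`, and since `ψ` is primitive the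
inner sum is `N(c)` for `x = -1` and `0` otherwise.
-/

open NumberField

namespace MulChar

variable {R R' : Type*} [CommRing R] [CommRing R']

/-- `χ` is primitive if it does not factor through `(R ⧸ J)ˣ` for any ideal `J ≠ ⊥`. -/
def IsPrimitive (χ : MulChar R R') : Prop :=
  ∀ J : Ideal R, J ≠ ⊥ → ∃ u : Rˣ, (u : R) - 1 ∈ J ∧ χ u ≠ 1

lemma isPrimitive_of_quotient {A : Type*} [CommRing A] {c : Ideal A} {χ : MulChar (A ⧸ c) R'}
    (hχ : ∀ d : Ideal A, c < d →
      ∃ x : A, IsUnit (Ideal.Quotient.mk c x) ∧ x - 1 ∈ d ∧ χ (Ideal.Quotient.mk c x) ≠ 1) :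
    χ.IsPrimitive := by
  intro J hJ
  have hc : c < J.comap (Ideal.Quotient.mk c) :=
    calc c = (⊥ : Ideal (A ⧸ c)).comap (Ideal.Quotient.mk c) := by
          rw [← RingHom.ker_eq_comap_bot, Ideal.mk_ker]
      _ < J.comap (Ideal.Quotient.mk c) := (Ideal.comap_mono bot_le).lt_of_ne fun h ↦
          hJ (Ideal.comap_injective_of_surjective _ Ideal.Quotient.mk_surjective h).symm
  obtain ⟨x, hxu, hx1, hχx⟩ := hχ _ hc
  exact ⟨hxu.unit, by simpa using hx1, hχx⟩

variable [Fintype R]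

lemma gaussSum_eq_sum_units [Fintype Rˣ] (χ : MulChar R R') (ψ : AddChar R R') :
    gaussSum χ ψ = ∑ u : Rˣ, χ u * ψ u :=
  (Fintype.sum_of_injective _ Units.val_injective _ _
    (fun _ hx ↦ by rw [map_nonunit χ fun hu ↦ hx ⟨hu.unit, rfl⟩, zero_mul]) fun _ ↦ rfl).symm

lemma IsPrimitive.gaussSum_mulShift_eq_zero [IsDomain R'] {χ : MulChar R R'}
    (hχ : χ.IsPrimitive) (ψ : AddChar R R') {a : R} (ha : ¬IsUnit a) :
    gaussSum χ (ψ.mulShift a) = 0 := by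
  have hann : (Ideal.span {a}).annihilator ≠ ⊥ := by
    rw [isUnit_iff_mem_nonZeroDivisors_of_finite, notMem_nonZeroDivisors_iff_right] at ha
    obtain ⟨y, hya, hy⟩ := ha
    exact (Submodule.ne_bot_iff _).2 ⟨y, (Submodule.mem_annihilator_span_singleton _ _).2 hya, hy⟩
  obtain ⟨u, hu1, hχu⟩ := hχ _ hann
  have hau : a * u = a := by
    rw [Submodule.mem_annihilator_span_singleton, smul_eq_mul, sub_mul, one_mul, sub_eq_zero] at hu1
    rw [mul_comm, hu1]
  have h := gaussSum_mulShift χ (ψ.mulShift a) u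
  rw [AddChar.mulShift_mulShift, hau] at h
  by_contra hG
  exact hχu ((mul_eq_right₀ hG).1 h)

lemma IsPrimitive.gaussSum_mulShift [IsDomain R'] {χ : MulChar R R'} (hχ : χ.IsPrimitive)
    (ψ : AddChar R R') (a : R) : gaussSum χ (ψ.mulShift a) = χ⁻¹ a * gaussSum χ ψ := by
  by_cases ha : IsUnit a
  · obtain ⟨u, rfl⟩ := ha
    exact gaussSum_mulShift_eq χ ψ u
  · rw [hχ.gaussSum_mulShift_eq_zero ψ ha, map_nonunit _ ha, zero_mul]

theorem IsPrimitive.gaussSum_inv_mul_gaussSum [IsDomain R'] {χ : MulChar R R'}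
    (hχ : χ.IsPrimitive) {ψ : AddChar R R'} (hψ : ψ.IsPrimitive) :
    gaussSum χ⁻¹ ψ * gaussSum χ ψ = χ (-1) * Fintype.card R := by
  classical
  calc gaussSum χ⁻¹ ψ * gaussSum χ ψ = ∑ a, ψ a * gaussSum χ (ψ.mulShift a) := by
        simp_rw [hχ.gaussSum_mulShift]
        rw [gaussSum, Finset.sum_mul]
        exact Finset.sum_congr rfl fun a _ ↦ by ring
    _ = ∑ x, χ x * ∑ a, ψ (a * (1 + x)) := by
        simp only [gaussSum, Finset.mul_sum, AddChar.mulShift_apply]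
        refine Finset.sum_comm.trans
          (Fintype.sum_congr _ _ fun x ↦ Fintype.sum_congr _ _ fun a ↦ ?_)
        rw [mul_left_comm, ← AddChar.map_add_eq_mul, mul_one_add]
    _ = χ (-1) * Fintype.card R := by
        simp only [AddChar.sum_mulShift _ hψ, Nat.cast_ite, Nat.cast_zero, mul_ite, mul_zero,
          add_eq_zero_iff_neg_eq, Finset.sum_ite_eq, Finset.mem_univ, if_true]

end MulChar

set_option synthInstance.maxHeartbeats 1000000 in
theorem gaussSum_conj_mul_gaussSum_general
    (F : Type) [Field F] [NumberField F]
    (c : Ideal (𝓞 F))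
    [Fintype (𝓞 F ⧸ c)] [Fintype (𝓞 F ⧸ c)ˣ]
    (φ : MulChar (𝓞 F ⧸ c) ℂ)
    (hφ : ∀ d : Ideal (𝓞 F), c < d →
      ∃ x : 𝓞 F, IsUnit (Ideal.Quotient.mk c x) ∧ x - 1 ∈ d ∧
        φ (Ideal.Quotient.mk c x) ≠ 1)
    (ψ : AddChar (𝓞 F ⧸ c) ℂ) (hψ : ψ.IsPrimitive) :
    (∑ u : (𝓞 F ⧸ c)ˣ, starRingEnd ℂ (φ u) * ψ u) * (∑ u : (𝓞 F ⧸ c)ˣ, φ u * ψ u) =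
      φ (-1) * (Ideal.absNorm c : ℂ) := by
  rw [Ideal.absNorm_apply, Submodule.cardQuot_apply, Nat.card_eq_fintype_card,
    ← (MulChar.isPrimitive_of_quotient hφ).gaussSum_inv_mul_gaussSum hψ,
    MulChar.gaussSum_eq_sum_units, MulChar.gaussSum_eq_sum_units]
  simp only [starRingEnd_apply, MulChar.star_apply']

set_option synthInstance.maxHeartbeats 1000000 in
/-- With the same setup (primitive character `φ` of `(O_F/c)ˣ`, primitive additive character
`ψ` of `O_F/c` induced by `e_F(·/c)` with `c` coprime to the different), one has
`G(φ̄) · G(φ) = φ(-1) · N(c)`. -/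
theorem gaussSum_conj_mul_gaussSum
    (F : Type) [Field F] [NumberField F]
    (c : Ideal (𝓞 F)) (hc : c ≠ ⊥)
    [Fintype (𝓞 F ⧸ c)] [Fintype (𝓞 F ⧸ c)ˣ]
    (φ : MulChar (𝓞 F ⧸ c) ℂ)
    (hφ : ∀ d : Ideal (𝓞 F), c < d →
      ∃ x : 𝓞 F, IsUnit (Ideal.Quotient.mk c x) ∧ x - 1 ∈ d ∧
        φ (Ideal.Quotient.mk c x) ≠ 1)
    (ψ : AddChar (𝓞 F ⧸ c) ℂ) (hψ : ψ.IsPrimitive) :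
    (∑ u : (𝓞 F ⧸ c)ˣ, starRingEnd ℂ (φ u) * ψ u) * (∑ u : (𝓞 F ⧸ c)ˣ, φ u * ψ u) =
      φ (-1) * (Ideal.absNorm c : ℂ) :=
  gaussSum_conj_mul_gaussSum_general F c φ hφ ψ hψ
end

section
/- For real s and integer j with Re(s ± j) > 0, the Mellin transform of the modified Bessel function of the second kind satisfies ∫₀^∞ y^s K_j(a y) dy/y = 2^{s-2} a^{-s} Γ((s+j)/2) Γ((s-j)/2) for any a > 0. -/
/-!
Insert the integral representation of `K_j` and exchange the two integrals (the integrand is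
nonnegative). The inner integral is a Gamma integral,
`∫₀^∞ y^(s-1) exp(-a y cosh t) dy = Γ(s) (a cosh t)^(-s)`, so it remains to evaluate
`∫₀^∞ cosh(j t) cosh(t)^(-s) dt`. With `p = (s+j)/2`, `q = (s-j)/2`, the substitution
`u = 1/(1 + e^(2t))` maps `(0, ∞)` onto `(0, 1/2)` and turns this integral into
`2^(s-2) ∫₀^(1/2) (u^(p-1)(1-u)^(q-1) + u^(q-1)(1-u)^(p-1)) du = 2^(s-2) B(p, q)`.
-/

open MeasureTheory Real Set

/-- The modified Bessel function of the second kind `K_j`, defined for positive real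
argument `x` by the standard integral representation
`K_j(x) = ∫₀^∞ exp(-x cosh t) cosh(j t) dt`. -/
noncomputable def besselK (j : ℤ) (x : ℝ) : ℝ :=
  ∫ t in Ioi (0 : ℝ), Real.exp (-x * Real.cosh t) * Real.cosh (j * t)

theorem integral_rpow_mul_one_sub_rpow {p q : ℝ} (hp : 0 < p) (hq : 0 < q) :
    ∫ u in (0 : ℝ)..1, u ^ (p - 1) * (1 - u) ^ (q - 1) = Gamma p * Gamma q / Gamma (p + q) := by
  have hbeta := Complex.betaIntegral_eq_Gamma_mul_div (u := p) (v := q)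
    (by simpa using hp) (by simpa using hq)
  have hreal : Complex.betaIntegral p q =
      ↑(∫ u in (0 : ℝ)..1, u ^ (p - 1) * (1 - u) ^ (q - 1)) := by
    rw [Complex.betaIntegral, ← intervalIntegral.integral_ofReal]
    refine intervalIntegral.integral_congr fun u hu => ?_
    rw [uIcc_of_le zero_le_one] at hu
    simp only [Complex.ofReal_mul, Complex.ofReal_cpow hu.1,
      Complex.ofReal_cpow (sub_nonneg.2 hu.2), Complex.ofReal_sub, Complex.ofReal_one]
  rw [hreal, ← Complex.ofReal_add, Complex.Gamma_ofReal, Complex.Gamma_ofReal,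
    Complex.Gamma_ofReal] at hbeta
  exact_mod_cast hbeta

theorem intervalIntegral_add_comp_one_sub {f : ℝ → ℝ} (hf : IntervalIntegrable f volume 0 1) :
    ∫ u in (0 : ℝ)..1 / 2, (f u + f (1 - u)) = ∫ u in (0 : ℝ)..1, f u := by
  have hf₁ : IntervalIntegrable f volume 0 (1 / 2) := hf.mono_set <| by
    rw [uIcc_of_le (by norm_num), uIcc_of_le zero_le_one]
    exact Icc_subset_Icc_right (by norm_num)
  have hf₂ : IntervalIntegrable f volume (1 / 2) 1 := hf.mono_set <| by
    rw [uIcc_of_le (by norm_num), uIcc_of_le zero_le_one]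
    exact Icc_subset_Icc_left (by norm_num)
  have hhalf : (1 : ℝ) - 1 / 2 = 1 / 2 := by norm_num
  have hreflect : IntervalIntegrable (fun u => f (1 - u)) volume 0 (1 / 2) := by
    simpa only [hhalf, sub_self] using (hf₂.comp_sub_left 1).symm
  rw [intervalIntegral.integral_add hf₁ hreflect, intervalIntegral.integral_comp_sub_left f 1,
    hhalf, sub_zero]
  exact intervalIntegral.integral_add_adjacent_intervals hf₁ hf₂

noncomputable def betaSubst (t : ℝ) : ℝ := (1 + exp (2 * t))⁻¹

lemma betaSubst_pos (t : ℝ) : 0 < betaSubst t := by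
  unfold betaSubst
  positivity

lemma betaSubst_lt_one (t : ℝ) : betaSubst t < 1 :=
  inv_lt_one_of_one_lt₀ (lt_add_of_pos_right 1 (exp_pos _))

lemma one_sub_betaSubst (t : ℝ) : 1 - betaSubst t = exp (2 * t) * betaSubst t := by
  unfold betaSubst
  field_simp
  ring

lemma hasDerivAt_betaSubst (t : ℝ) :
    HasDerivAt betaSubst (-(2 * betaSubst t * (1 - betaSubst t))) t := by
  have h : HasDerivAt (fun t => 1 + exp (2 * t)) (exp (2 * t) * 2) t := by
    simpa using ((hasDerivAt_id t).const_mul 2).exp.const_add 1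
  refine (h.inv (by positivity)).congr_deriv ?_
  rw [one_sub_betaSubst, betaSubst]
  field_simp

lemma strictAnti_betaSubst : StrictAnti betaSubst := fun x y hxy => by
  unfold betaSubst
  gcongr

lemma betaSubst_image_Ioi : betaSubst '' Ioi 0 = Ioo 0 (1 / 2) := by
  ext u
  constructor
  · rintro ⟨t, ht, rfl⟩
    have h₀ : betaSubst 0 = 1 / 2 := by norm_num [betaSubst]
    exact ⟨betaSubst_pos t, h₀ ▸ strictAnti_betaSubst ht⟩
  · rintro ⟨hu₀, hu₂⟩
    have hinv : 2 < u⁻¹ := by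
      rw [lt_inv_comm₀ two_pos hu₀]
      linarith
    refine ⟨log (u⁻¹ - 1) / 2, div_pos (log_pos (by linarith)) two_pos, ?_⟩
    rw [betaSubst, mul_div_cancel₀ _ two_ne_zero, exp_log (by linarith), add_sub_cancel, inv_inv]

theorem integral_Ioi_betaSubst (F : ℝ → ℝ) :
    ∫ t in Ioi 0, 2 * betaSubst t * (1 - betaSubst t) * F (betaSubst t) =
      ∫ u in Ioo 0 (1 / 2), F u := by
  rw [← betaSubst_image_Ioi, integral_image_eq_integral_abs_deriv_smul measurableSet_Ioi
    (fun t _ => (hasDerivAt_betaSubst t).hasDerivWithinAt) strictAnti_betaSubst.injective.injOn]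
  refine setIntegral_congr_fun measurableSet_Ioi fun t _ => ?_
  have := betaSubst_pos t
  have := betaSubst_lt_one t
  rw [abs_neg, abs_of_pos (by nlinarith), smul_eq_mul]

lemma cosh_mul_mul_cosh_rpow_neg (p q t : ℝ) :
    cosh ((p - q) * t) * cosh t ^ (-(p + q)) = 2 ^ (p + q - 1) *
      (betaSubst t ^ q * (1 - betaSubst t) ^ p + betaSubst t ^ p * (1 - betaSubst t) ^ q) := by
  set L := log (1 + exp (2 * t))
  have hu : betaSubst t = exp (-L) := by
    rw [exp_neg, exp_log (by positivity), betaSubst]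
  have h1u : 1 - betaSubst t = exp (2 * t - L) := by
    rw [one_sub_betaSubst, hu, ← exp_add]
    ring_nf
  have hcosh : cosh t = exp (L - t) / 2 := by
    rw [exp_sub, exp_log (by positivity), cosh_eq, exp_neg]
    field_simp
    rw [show 2 * t = t + t by ring, exp_add]
    ring
  rw [h1u, hu, hcosh, div_rpow (exp_pos _).le two_pos.le, cosh_eq, ← exp_mul, ← exp_mul,
    ← exp_mul, ← exp_mul, ← exp_mul, rpow_neg two_pos.le, rpow_sub_one two_ne_zero]
  field_simp
  ring_nf
  simp only [← exp_add]
  ring_nf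

theorem integral_cosh_mul_cosh_rpow_neg {p q : ℝ} (hp : 0 < p) (hq : 0 < q) :
    ∫ t in Ioi 0, cosh ((p - q) * t) * cosh t ^ (-(p + q)) =
      2 ^ (p + q - 2) * (Gamma p * Gamma q / Gamma (p + q)) := by
  set f : ℝ → ℝ := fun u => u ^ (p - 1) * (1 - u) ^ (q - 1)
  have hf : IntervalIntegrable f volume 0 1 :=
    intervalIntegral.intervalIntegrable_of_integral_ne_zero <| by
      rw [integral_rpow_mul_one_sub_rpow hp hq]
      positivity
  have hpointwise (t : ℝ) : cosh ((p - q) * t) * cosh t ^ (-(p + q)) =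
      2 * betaSubst t * (1 - betaSubst t) *
        (2 ^ (p + q - 2) * (f (betaSubst t) + f (1 - betaSubst t))) := by
    have hu := betaSubst_pos t
    have hu' := sub_pos.2 (betaSubst_lt_one t)
    simp only [f, cosh_mul_mul_cosh_rpow_neg, sub_sub_cancel, rpow_sub_one hu.ne',
      rpow_sub_one hu'.ne', rpow_sub two_pos, rpow_one, rpow_two]
    field_simp
    ring
  calc ∫ t in Ioi 0, cosh ((p - q) * t) * cosh t ^ (-(p + q))
      = ∫ u in Ioo 0 (1 / 2), 2 ^ (p + q - 2) * (f u + f (1 - u)) := by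
        simp only [hpointwise]
        exact integral_Ioi_betaSubst fun u => 2 ^ (p + q - 2) * (f u + f (1 - u))
    _ = 2 ^ (p + q - 2) * ∫ u in (0 : ℝ)..1 / 2, (f u + f (1 - u)) := by
        rw [integral_const_mul, intervalIntegral.integral_of_le (by norm_num),
          integral_Ioc_eq_integral_Ioo]
    _ = 2 ^ (p + q - 2) * (Gamma p * Gamma q / Gamma (p + q)) := by
        rw [intervalIntegral_add_comp_one_sub hf, integral_rpow_mul_one_sub_rpow hp hq]

theorem integral_rpow_mul_besselK {s a : ℝ} (hs : 0 < s) (ha : 0 < a) (j : ℤ)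
    (hj : IntegrableOn (fun t => cosh (j * t) * cosh t ^ (-s)) (Ioi 0)) :
    ∫ y in Ioi 0, y ^ (s - 1) * besselK j (a * y) =
      a ^ (-s) * Gamma s * ∫ t in Ioi 0, cosh (j * t) * cosh t ^ (-s) := by
  set G : ℝ → ℝ → ℝ := fun t y => cosh (j * t) * (y ^ (s - 1) * exp (-(a * cosh t * y)))
  have hinner (t : ℝ) :
      ∫ y in Ioi 0, G t y = a ^ (-s) * Gamma s * (cosh (j * t) * cosh t ^ (-s)) := by
    have hat : 0 < a * cosh t := mul_pos ha (cosh_pos t)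
    rw [integral_const_mul, integral_rpow_mul_exp_neg_mul_Ioi hs hat, one_div, inv_rpow hat.le,
      mul_rpow ha.le (cosh_pos t).le, mul_inv, ← rpow_neg ha.le, ← rpow_neg (cosh_pos t).le]
    ring
  have hG_nonneg (t : ℝ) : ∀ y ∈ Ioi (0 : ℝ), 0 ≤ G t y := fun y (hy : 0 < y) => by
    positivity
  have hG : Integrable (Function.uncurry G)
      ((volume.restrict (Ioi 0)).prod (volume.restrict (Ioi 0))) := by
    refine (integrable_prod_iff (by fun_prop)).2 ⟨ae_of_all _ fun t => ?_, ?_⟩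
    · refine Integrable.of_integral_ne_zero ?_
      change ∫ y in Ioi 0, G t y ≠ 0
      rw [hinner]
      positivity
    · refine (hj.const_mul (a ^ (-s) * Gamma s)).congr (ae_of_all _ fun t => ?_)
      simp only [Function.uncurry_apply_pair, norm_eq_abs]
      rw [← hinner,
        setIntegral_congr_fun measurableSet_Ioi fun y hy => abs_of_nonneg (hG_nonneg t y hy)]
  calc ∫ y in Ioi 0, y ^ (s - 1) * besselK j (a * y)
      = ∫ y in Ioi 0, ∫ t in Ioi 0, G t y := by
        refine setIntegral_congr_fun measurableSet_Ioi fun y _ => ?_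
        rw [besselK, ← integral_const_mul]
        refine setIntegral_congr_fun measurableSet_Ioi fun t _ => ?_
        simp only [G]
        ring_nf
    _ = ∫ t in Ioi 0, ∫ y in Ioi 0, G t y := (integral_integral_swap hG).symm
    _ = a ^ (-s) * Gamma s * ∫ t in Ioi 0, cosh (j * t) * cosh t ^ (-s) := by
        simp only [hinner, integral_const_mul]

/-- For real `s` and integer `j` with `s + j > 0` and `s - j > 0`, and any `a > 0`, the
Mellin transform of the modified Bessel function of the second kind satisfies
`∫₀^∞ y^s K_j(a y) dy/y = 2^(s-2) a^(-s) Γ((s+j)/2) Γ((s-j)/2)`. -/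
theorem mellin_besselK (s : ℝ) (j : ℤ) (a : ℝ) (ha : 0 < a)
    (hsj : 0 < s + j) (hsj' : 0 < s - j) :
    ∫ y in Ioi (0 : ℝ), y ^ s * besselK j (a * y) / y =
      (2 : ℝ) ^ (s - 2) * a ^ (-s) * Real.Gamma ((s + j) / 2) * Real.Gamma ((s - j) / 2) := by
  have hp : 0 < (s + j) / 2 := by positivity
  have hq : 0 < (s - j) / 2 := by positivity
  have hs : 0 < s := by linarith
  have hcosh := integral_cosh_mul_cosh_rpow_neg hp hq
  rw [show (s + j) / 2 - (s - j) / 2 = j by ring, show (s + j) / 2 + (s - j) / 2 = s by ring]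
    at hcosh
  have hint : IntegrableOn (fun t => cosh (j * t) * cosh t ^ (-s)) (Ioi 0) :=
    Integrable.of_integral_ne_zero <| by
      rw [hcosh]
      positivity
  calc ∫ y in Ioi 0, y ^ s * besselK j (a * y) / y
      = ∫ y in Ioi 0, y ^ (s - 1) * besselK j (a * y) :=
        setIntegral_congr_fun measurableSet_Ioi fun y (hy : 0 < y) => by
          rw [rpow_sub_one hy.ne']
          ring
    _ = _ := by
        rw [integral_rpow_mul_besselK hs ha j hint, hcosh]
        field_simp [(Gamma_pos_of_pos hs).ne']
end
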